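/- Fix s₁ ≥ 0, s₂ ≤ 0, α > 0, β > 0, let g ∈ ℓ², and let g_n be any sequence supported in ℤ_n^d ∖ {0}. Let (u,v) be the unique minimizer of I(u,v) := ½|u|_{s₁}² + (α/2)‖u + v − g‖² + (β/2)|v|_{s₂}² with data g, and let (u_n, v_n) be the unique minimizer of the same functional with data g_n. Then |u − u_n|²_{s₁} + β |v_n − v|²_{s₂} + (α/2) ‖u_n + v_n − u − v‖² ≤ (α/2) ‖g − g_n‖². -/

import Mathlib

open scoped BigOperators
open Filter

noncomputable section

/-- Index set `ℤ^d \ {0}` of nonzero frequencies. -/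
abbrev K (d : ℕ) : Type := {k : Fin d → ℤ // k ≠ 0}

/-- Euclidean norm `|k|` of a frequency `k ∈ ℤ^d \ {0}`. -/
noncomputable def nrm {d : ℕ} (k : K d) : ℝ := Real.sqrt (∑ i : Fin d, ((k.1 i : ℝ)) ^ 2)

/-- Squared fractional Sobolev seminorm `|u|_s² = Σ_k |k|^{2s} |u_k|²`. -/
noncomputable def HnormSq {d : ℕ} (s : ℝ) (u : K d → ℂ) : ℝ :=
  ∑' k : K d, nrm k ^ (2 * s) * ‖u k‖ ^ 2

/-- `u ∈ ℓ²`, i.e. `‖u‖ = |u|_0 < ∞`. -/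
def MemL2 {d : ℕ} (u : K d → ℂ) : Prop := Summable fun k : K d => ‖u k‖ ^ 2

/-- `|u|_s < ∞`. -/
def MemHs {d : ℕ} (s : ℝ) (u : K d → ℂ) : Prop :=
  Summable fun k : K d => nrm k ^ (2 * s) * ‖u k‖ ^ 2

/-- Membership `k ∈ ℤ_n^d`, i.e. `−n/2 ≤ k_i ≤ n/2 − 1` for all `i`. -/
def inZn {d : ℕ} (n : ℕ) (k : K d) : Prop :=
  ∀ i : Fin d, -((n : ℤ) / 2) ≤ k.1 i ∧ k.1 i ≤ (n : ℤ) / 2 - 1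

instance {d : ℕ} (n : ℕ) (k : K d) : Decidable (inZn n k) := by
  unfold inZn; infer_instance

/-- Truncation `P_n v` of a sequence to the modes in `ℤ_n^d ∖ {0}`. -/
def trunc {d : ℕ} (n : ℕ) (v : K d → ℂ) : K d → ℂ :=
  fun k => if inZn n k then v k else 0

/-!
Perturbing a minimizer in a single Fourier mode gives the Euler–Lagrange equations
`|k|^{2s₁} u_k + α (u_k + v_k − g_k) = 0` and `β |k|^{2s₂} v_k + α (u_k + v_k − g_k) = 0`.
They are linear in `(u, v, g)`, so the differences `U = u − u_n`, `V = v − v_n`, `G = g − g_n`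
satisfy the same equations; pairing them with `U` and `V` gives the estimate mode by mode, and
summing over `k` gives it globally.
-/

section InnerProductSpace

variable {F : Type*} [NormedAddCommGroup F] [InnerProductSpace ℝ F]

lemma smul_add_smul_eq_zero_of_forall_le {r ρ : ℝ} (hrρ : 0 < r + ρ) {a e : F}
    (h : ∀ c : F, r * ‖a‖ ^ 2 + ρ * ‖e‖ ^ 2 ≤ r * ‖a + c‖ ^ 2 + ρ * ‖e + c‖ ^ 2) :
    r • a + ρ • e = 0 := by
  set w := r • a + ρ • e
  set t := (r + ρ)⁻¹
  have hw : r * inner ℝ a w + ρ * inner ℝ e w = ‖w‖ ^ 2 := by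
    rw [← real_inner_self_eq_norm_sq]
    simp only [w, inner_add_left, real_inner_smul_left]
  have ht : t * (r + ρ) = 1 := inv_mul_cancel₀ hrρ.ne'
  have hc := h (-(t • w))
  simp only [norm_add_sq_real, inner_neg_right, real_inner_smul_right, norm_neg, norm_smul,
    Real.norm_eq_abs, mul_pow, sq_abs] at hc
  have hw0 : t * ‖w‖ ^ 2 ≤ 0 := by linear_combination hc - 2 * t * hw + t * ‖w‖ ^ 2 * ht
  simpa using nonpos_of_mul_nonpos_right hw0 (inv_pos.2 hrρ)

lemma norm_sq_bound_of_optimality_system {r t ρ : ℝ} (hρ : 0 < ρ) {U V G : F}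
    (hU : r • U + ρ • (U + V - G) = 0) (hV : t • V + ρ • (U + V - G) = 0) :
    r * ‖U‖ ^ 2 + t * ‖V‖ ^ 2 + ρ / 2 * ‖U + V‖ ^ 2 ≤ ρ / 2 * ‖G‖ ^ 2 := by
  set W := U + V - G
  have hUU : r * ‖U‖ ^ 2 + ρ * inner ℝ W U = 0 := by
    simpa [inner_add_left, real_inner_smul_left, real_inner_self_eq_norm_sq]
      using congrArg (inner ℝ · U) hU
  have hVV : t * ‖V‖ ^ 2 + ρ * inner ℝ W V = 0 := by
    simpa [inner_add_left, real_inner_smul_left, real_inner_self_eq_norm_sq]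
      using congrArg (inner ℝ · V) hV
  have hG : ‖G‖ ^ 2 = ‖U + V‖ ^ 2 - 2 * (inner ℝ W U + inner ℝ W V) + ‖W‖ ^ 2 := by
    rw [show G = (U + V) - W by simp [W], norm_sub_sq_real, real_inner_comm, inner_add_right]
  rw [hG]
  nlinarith [mul_nonneg hρ.le (sq_nonneg ‖W‖)]

end InnerProductSpace

lemma HasSum.apply_update {ι E : Type*} [DecidableEq ι] (φ : ι → E → ℝ) {x : ι → E} {a : ℝ}
    (hx : HasSum (fun k => φ k (x k)) a) (k₀ : ι) (y : E) :
    HasSum (fun k => φ k (Function.update x k₀ y k)) (φ k₀ y - φ k₀ (x k₀) + a) := by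
  simpa only [Function.apply_update φ] using hx.update k₀ (φ k₀ y)

lemma tsum_add_tsum_add_tsum_le {ι : Type*} {f₁ f₂ f₃ g : ι → ℝ} (h₁ : ∀ k, 0 ≤ f₁ k)
    (h₂ : ∀ k, 0 ≤ f₂ k) (h₃ : ∀ k, 0 ≤ f₃ k) (hg : Summable g)
    (h : ∀ k, f₁ k + f₂ k + f₃ k ≤ g k) :
    ∑' k, f₁ k + ∑' k, f₂ k + ∑' k, f₃ k ≤ ∑' k, g k := by
  have hsum := Summable.of_nonneg_of_le (fun k => by linarith [h₁ k, h₂ k, h₃ k]) h hg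
  have hs₁ := hsum.of_nonneg_of_le h₁ fun k => by linarith [h₂ k, h₃ k]
  have hs₂ := hsum.of_nonneg_of_le h₂ fun k => by linarith [h₁ k, h₃ k]
  have hs₃ := hsum.of_nonneg_of_le h₃ fun k => by linarith [h₁ k, h₂ k]
  rw [← hs₁.tsum_add hs₂, ← (hs₁.add hs₂).tsum_add hs₃]
  exact hsum.tsum_le_tsum h hg

section Sequences

variable {d : ℕ}

lemma one_le_nrm (k : K d) : 1 ≤ nrm k := by
  obtain ⟨i, hi⟩ : ∃ i, k.1 i ≠ 0 := by
    by_contra! h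
    exact k.2 (funext h)
  have hi' : (1 : ℝ) ≤ (k.1 i : ℝ) ^ 2 := by
    exact_mod_cast one_le_sq_iff_one_le_abs _ |>.2 (Int.one_le_abs hi)
  exact Real.one_le_sqrt.2 <| hi'.trans <|
    Finset.single_le_sum (f := fun j => (k.1 j : ℝ) ^ 2) (fun _ _ => sq_nonneg _)
      (Finset.mem_univ i)

lemma nrm_rpow_nonneg (k : K d) (s : ℝ) : 0 ≤ nrm k ^ s :=
  Real.rpow_nonneg (zero_le_one.trans (one_le_nrm k)) s

lemma memL2_iff_memℓp {u : K d → ℂ} : MemL2 u ↔ Memℓp u 2 := by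
  rw [memℓp_gen_iff (by norm_num)]
  simp [MemL2]

lemma MemL2.sub {u v : K d → ℂ} (hu : MemL2 u) (hv : MemL2 v) : MemL2 (u - v) :=
  memL2_iff_memℓp.2 <| (memL2_iff_memℓp.1 hu).sub (memL2_iff_memℓp.1 hv)

lemma MemL2.memHs_of_nonpos {s : ℝ} (hs : s ≤ 0) {v : K d → ℂ} (hv : MemL2 v) :
    MemHs s v := by
  refine Summable.of_nonneg_of_le
    (fun k => mul_nonneg (nrm_rpow_nonneg k _) (sq_nonneg _)) (fun k => ?_) hv
  have h : nrm k ^ (2 * s) ≤ 1 :=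
    Real.rpow_le_one_of_one_le_of_nonpos (one_le_nrm k) (by linarith)
  nlinarith [sq_nonneg ‖v k‖, nrm_rpow_nonneg k (2 * s)]

lemma finite_setOf_inZn (n : ℕ) : {k : K d | inZn n k}.Finite := by
  have hbox := Set.Finite.pi (t := fun _ : Fin d => Set.Icc (-((n : ℤ) / 2)) ((n : ℤ) / 2 - 1))
    fun _ => Set.finite_Icc _ _
  exact (hbox.preimage Subtype.val_injective.injOn).subset fun k hk i _ => hk i

lemma memL2_of_forall_not_inZn (n : ℕ) {g : K d → ℂ} (hg : ∀ k, ¬ inZn n k → g k = 0) :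
    MemL2 g := by
  refine summable_of_hasFiniteSupport <| (finite_setOf_inZn n).subset fun k hk => ?_
  by_contra hk'
  exact hk (by simp [hg k hk'])

/-- The functional `I(u, v)` with data `g`. -/
def decompEnergy (s₁ s₂ α β : ℝ) (g u v : K d → ℂ) : ℝ :=
  (1 / 2) * HnormSq s₁ u + (α / 2) * (∑' k : K d, ‖u k + v k - g k‖ ^ 2) +
    (β / 2) * HnormSq s₂ v

variable {s₁ s₂ α β : ℝ} {g u v : K d → ℂ}

lemma hasSum_fidelity (hg : MemL2 g) (hu : MemL2 u) (hv : MemL2 v) :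
    HasSum (fun k => ‖u k + v k - g k‖ ^ 2) (∑' k, ‖u k + v k - g k‖ ^ 2) :=
  ((memL2_iff_memℓp.1 hu).add (memL2_iff_memℓp.1 hv) |>.sub (memL2_iff_memℓp.1 hg)
    |> memL2_iff_memℓp.2).hasSum

variable (hα : 0 < α) (hg : MemL2 g) (hu₂ : MemL2 u) (hus : MemHs s₁ u) (hv₂ : MemL2 v)
  (hmin : ∀ w z : K d → ℂ, MemL2 w → MemHs s₁ w → MemL2 z →
    decompEnergy s₁ s₂ α β g u v ≤ decompEnergy s₁ s₂ α β g w z)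
include hα hg hu₂ hus hv₂ hmin

lemma euler_lagrange_left (k₀ : K d) :
    nrm k₀ ^ (2 * s₁) • u k₀ + α • (u k₀ + v k₀ - g k₀) = 0 := by
  classical
  refine smul_add_smul_eq_zero_of_forall_le
    (add_pos_of_nonneg_of_pos (nrm_rpow_nonneg k₀ _) hα) fun c => ?_
  have hL2 := hu₂.hasSum.apply_update (fun _ x => ‖x‖ ^ 2) k₀ (u k₀ + c)
  have hHs := hus.hasSum.apply_update (fun k x => nrm k ^ (2 * s₁) * ‖x‖ ^ 2) k₀ (u k₀ + c)
  have hfid := (hasSum_fidelity hg hu₂ hv₂).apply_update (fun k x => ‖x + v k - g k‖ ^ 2) k₀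
    (u k₀ + c)
  have h := hmin _ v hL2.summable hHs.summable hv₂
  simp only [decompEnergy, HnormSq, hHs.tsum_eq, hfid.tsum_eq] at h
  rw [show u k₀ + v k₀ - g k₀ + c = u k₀ + c + v k₀ - g k₀ by ring]
  linarith

lemma euler_lagrange_right (hβ : 0 ≤ β) (hs₂ : s₂ ≤ 0) (k₀ : K d) :
    (β * nrm k₀ ^ (2 * s₂)) • v k₀ + α • (u k₀ + v k₀ - g k₀) = 0 := by
  classical
  refine smul_add_smul_eq_zero_of_forall_le
    (add_pos_of_nonneg_of_pos (mul_nonneg hβ (nrm_rpow_nonneg k₀ _)) hα) fun c => ?_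
  have hL2 := hv₂.hasSum.apply_update (fun _ x => ‖x‖ ^ 2) k₀ (v k₀ + c)
  have hHs := (hv₂.memHs_of_nonpos hs₂).hasSum.apply_update
    (fun k x => nrm k ^ (2 * s₂) * ‖x‖ ^ 2) k₀ (v k₀ + c)
  have hfid := (hasSum_fidelity hg hu₂ hv₂).apply_update (fun k x => ‖u k + x - g k‖ ^ 2) k₀
    (v k₀ + c)
  have h := hmin u _ hu₂ hus hL2.summable
  simp only [decompEnergy, HnormSq, hHs.tsum_eq, hfid.tsum_eq] at h
  rw [show u k₀ + v k₀ - g k₀ + c = u k₀ + (v k₀ + c) - g k₀ by ring]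
  linarith

end Sequences

theorem stmt_15_general (d : ℕ)
    (s₁ s₂ α β : ℝ) (hs₂ : s₂ ≤ 0) (hα : 0 < α) (hβ : 0 < β)
    (g : K d → ℂ) (hg : MemL2 g)
    (n : ℕ) (gn : K d → ℂ)
    (hgn : ∀ k : K d, ¬ inZn n k → gn k = 0)
    (u v un vn : K d → ℂ)
    (hu2 : MemL2 u) (hus : MemHs s₁ u) (hv2 : MemL2 v)
    (hmin : ∀ w z : K d → ℂ, MemL2 w → MemHs s₁ w → MemL2 z →
      (1 / 2) * HnormSq s₁ u + (α / 2) * (∑' k : K d, ‖u k + v k - g k‖ ^ 2) +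
          (β / 2) * HnormSq s₂ v
        ≤ (1 / 2) * HnormSq s₁ w + (α / 2) * (∑' k : K d, ‖w k + z k - g k‖ ^ 2) +
          (β / 2) * HnormSq s₂ z)
    (hun2 : MemL2 un) (huns : MemHs s₁ un) (hvn2 : MemL2 vn)
    (hminn : ∀ w z : K d → ℂ, MemL2 w → MemHs s₁ w → MemL2 z →
      (1 / 2) * HnormSq s₁ un + (α / 2) * (∑' k : K d, ‖un k + vn k - gn k‖ ^ 2) +
          (β / 2) * HnormSq s₂ vn
        ≤ (1 / 2) * HnormSq s₁ w + (α / 2) * (∑' k : K d, ‖w k + z k - gn k‖ ^ 2) +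
          (β / 2) * HnormSq s₂ z) :
    HnormSq s₁ (u - un) + β * HnormSq s₂ (vn - v) +
        (α / 2) * (∑' k : K d, ‖un k + vn k - u k - v k‖ ^ 2)
      ≤ (α / 2) * (∑' k : K d, ‖g k - gn k‖ ^ 2) := by
  have hgn₂ : MemL2 gn := memL2_of_forall_not_inZn n hgn
  have hpt : ∀ k, nrm k ^ (2 * s₁) * ‖(u - un) k‖ ^ 2 + β * (nrm k ^ (2 * s₂) * ‖(vn - v) k‖ ^ 2)
      + α / 2 * ‖un k + vn k - u k - v k‖ ^ 2 ≤ α / 2 * ‖g k - gn k‖ ^ 2 := by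
    intro k
    have hU : nrm k ^ (2 * s₁) • (u k - un k)
        + α • ((u k - un k) + (v k - vn k) - (g k - gn k)) = 0 := by
      linear_combination (norm := module)
        euler_lagrange_left hα hg hu2 hus hv2 hmin k -
          euler_lagrange_left hα hgn₂ hun2 huns hvn2 hminn k
    have hV : (β * nrm k ^ (2 * s₂)) • (v k - vn k)
        + α • ((u k - un k) + (v k - vn k) - (g k - gn k)) = 0 := by
      linear_combination (norm := module)
        euler_lagrange_right hα hg hu2 hus hv2 hmin hβ.le hs₂ k -
          euler_lagrange_right hα hgn₂ hun2 huns hvn2 hminn hβ.le hs₂ k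
    have h := norm_sq_bound_of_optimality_system hα hU hV
    rw [Pi.sub_apply, Pi.sub_apply, norm_sub_rev (vn k),
      show un k + vn k - u k - v k = -((u k - un k) + (v k - vn k)) by ring, norm_neg]
    linarith
  simp only [HnormSq, ← tsum_mul_left]
  exact tsum_add_tsum_add_tsum_le (fun k => mul_nonneg (nrm_rpow_nonneg k _) (sq_nonneg _))
    (fun k => mul_nonneg hβ.le (mul_nonneg (nrm_rpow_nonneg k _) (sq_nonneg _)))
    (fun k => mul_nonneg (by linarith) (sq_nonneg _)) ((hg.sub hgn₂).mul_left _) hpt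

/-- error estimate between the minimizer `(u,v)` of the decomposition functional
with data `g` and the minimizer `(u_n,v_n)` with data `g_n` supported in `ℤ_n^d ∖ {0}`:
`|u−u_n|²_{s₁} + β|v_n−v|²_{s₂} + (α/2)‖u_n+v_n−u−v‖² ≤ (α/2)‖g−g_n‖²`. -/
theorem stmt_15 (d : ℕ) (hd : 1 ≤ d)
    (s₁ s₂ α β : ℝ) (hs₁ : 0 ≤ s₁) (hs₂ : s₂ ≤ 0) (hα : 0 < α) (hβ : 0 < β)
    (g : K d → ℂ) (hg : MemL2 g)
    (n : ℕ) (hne : Even n) (gn : K d → ℂ)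
    (hgn : ∀ k : K d, ¬ inZn n k → gn k = 0)
    (u v un vn : K d → ℂ)
    (hu2 : MemL2 u) (hus : MemHs s₁ u) (hv2 : MemL2 v)
    (hmin : ∀ w z : K d → ℂ, MemL2 w → MemHs s₁ w → MemL2 z →
      (1 / 2) * HnormSq s₁ u + (α / 2) * (∑' k : K d, ‖u k + v k - g k‖ ^ 2) +
          (β / 2) * HnormSq s₂ v
        ≤ (1 / 2) * HnormSq s₁ w + (α / 2) * (∑' k : K d, ‖w k + z k - g k‖ ^ 2) +
          (β / 2) * HnormSq s₂ z)
    (hun2 : MemL2 un) (huns : MemHs s₁ un) (hvn2 : MemL2 vn)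
    (hminn : ∀ w z : K d → ℂ, MemL2 w → MemHs s₁ w → MemL2 z →
      (1 / 2) * HnormSq s₁ un + (α / 2) * (∑' k : K d, ‖un k + vn k - gn k‖ ^ 2) +
          (β / 2) * HnormSq s₂ vn
        ≤ (1 / 2) * HnormSq s₁ w + (α / 2) * (∑' k : K d, ‖w k + z k - gn k‖ ^ 2) +
          (β / 2) * HnormSq s₂ z) :
    HnormSq s₁ (u - un) + β * HnormSq s₂ (vn - v) +
        (α / 2) * (∑' k : K d, ‖un k + vn k - u k - v k‖ ^ 2)
      ≤ (α / 2) * (∑' k : K d, ‖g k - gn k‖ ^ 2) :=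
  stmt_15_general d s₁ s₂ α β hs₂ hα hβ g hg n gn hgn u v un vn hu2 hus hv2 hmin hun2 huns hvn2
    hminn
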